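/- A direct product of rings R₁ × ⋯ × R_n is left GF-closed if and only if each R_i is left GF-closed. -/

import Mathlib

open TensorProduct
universe u
section RTensor
variable (R : Type u) [Ring R]
def trel (A : Type u) [AddCommGroup A] [Module Rᵐᵒᵖ A]
    (B : Type u) [AddCommGroup B] [Module R B] : Submodule ℤ (TensorProduct ℤ A B) :=
  Submodule.span ℤ { z | ∃ (r : R) (a : A) (b : B),
    z = (MulOpposite.op r • a) ⊗ₜ[ℤ] b - a ⊗ₜ[ℤ] (r • b) }
def RTensor (A : Type u) [AddCommGroup A] [Module Rᵐᵒᵖ A]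
    (B : Type u) [AddCommGroup B] [Module R B] : Type u :=
  TensorProduct ℤ A B ⧸ trel R A B
noncomputable instance (A : Type u) [AddCommGroup A] [Module Rᵐᵒᵖ A]
    (B : Type u) [AddCommGroup B] [Module R B] : AddCommGroup (RTensor R A B) := by
  unfold RTensor; infer_instance
noncomputable instance (A : Type u) [AddCommGroup A] [Module Rᵐᵒᵖ A]
    (B : Type u) [AddCommGroup B] [Module R B] : Module ℤ (RTensor R A B) := by
  unfold RTensor; infer_instance
variable {A A' : Type u} [AddCommGroup A] [Module Rᵐᵒᵖ A] [AddCommGroup A'] [Module Rᵐᵒᵖ A']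
variable {B B' : Type u} [AddCommGroup B] [Module R B] [AddCommGroup B'] [Module R B']
noncomputable def RTensor.map (A : Type u) [AddCommGroup A] [Module Rᵐᵒᵖ A]
    (f : B →ₗ[R] B') : RTensor R A B →ₗ[ℤ] RTensor R A B' :=
  Submodule.mapQ (trel R A B) (trel R A B')
    (TensorProduct.map LinearMap.id f.toAddMonoidHom.toIntLinearMap)
    (by
      rw [trel, Submodule.span_le]
      rintro z ⟨r, a, b, rfl⟩
      simp only [SetLike.mem_coe, Submodule.mem_comap, map_sub, TensorProduct.map_tmul,
        LinearMap.id_coe, id_eq, AddMonoidHom.coe_toIntLinearMap, LinearMap.toAddMonoidHom_coe,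
        LinearMap.map_smul]
      have h : TensorProduct.map LinearMap.id f.toAddMonoidHom.toIntLinearMap
          ((MulOpposite.op r • a) ⊗ₜ[ℤ] b - a ⊗ₜ[ℤ] (r • b)) =
          (MulOpposite.op r • a) ⊗ₜ[ℤ] f b - a ⊗ₜ[ℤ] (r • f b) := by simp
      exact Submodule.subset_span ⟨r, a, f b, h⟩)
noncomputable def RTensor.lmap (g : A →ₗ[Rᵐᵒᵖ] A')
    (B : Type u) [AddCommGroup B] [Module R B] : RTensor R A B →ₗ[ℤ] RTensor R A' B :=
  Submodule.mapQ (trel R A B) (trel R A' B)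
    (TensorProduct.map g.toAddMonoidHom.toIntLinearMap LinearMap.id)
    (by
      rw [trel, Submodule.span_le]
      rintro z ⟨r, a, b, rfl⟩
      simp only [SetLike.mem_coe, Submodule.mem_comap, map_sub, TensorProduct.map_tmul,
        LinearMap.id_coe, id_eq, AddMonoidHom.coe_toIntLinearMap, LinearMap.toAddMonoidHom_coe,
        LinearMap.map_smul]
      have h : TensorProduct.map g.toAddMonoidHom.toIntLinearMap LinearMap.id
          ((MulOpposite.op r • a) ⊗ₜ[ℤ] b - a ⊗ₜ[ℤ] (r • b)) =
          (MulOpposite.op r • g a) ⊗ₜ[ℤ] b - g a ⊗ₜ[ℤ] (r • b) := by simp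
      exact Submodule.subset_span ⟨r, g a, b, h⟩)
end RTensor

/-- A left `R`-module `B` is flat if tensoring with it preserves injectivity
of maps of right `R`-modules. -/
def FlatModule (R : Type u) [Ring R] (B : Type u) [AddCommGroup B] [Module R B] : Prop :=
  ∀ (A A' : Type u) [AddCommGroup A] [Module Rᵐᵒᵖ A] [AddCommGroup A'] [Module Rᵐᵒᵖ A']
    (g : A →ₗ[Rᵐᵒᵖ] A'), Function.Injective g → Function.Injective (RTensor.lmap R g B)

/-- A witness that `M` is a Gorenstein flat left `R`-module: a doubly infinite exact
sequence of flat left `R`-modules `⋯ → F (-1) → F 0 → F 1 → ⋯` with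
`M ≅ Im (F 0 → F 1)`, which stays exact after applying `I ⊗_R −` for every
injective right `R`-module `I`. -/
structure GorensteinFlatWitness (R : Type u) [Ring R]
    (M : Type u) [AddCommGroup M] [Module R M] where
  F : ℤ → Type u
  [acg : ∀ i, AddCommGroup (F i)]
  [mod : ∀ i, Module R (F i)]
  d : ∀ i, F i →ₗ[R] F (i + 1)
  flat : ∀ i, FlatModule R (F i)
  exact : ∀ i, Function.Exact (d i) (d (i + 1))
  iso : M ≃ₗ[R] LinearMap.range (d 0)
  tensorExact : ∀ (I : Type u) [AddCommGroup I] [Module Rᵐᵒᵖ I], Module.Injective Rᵐᵒᵖ I →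
    ∀ i, Function.Exact (RTensor.map R I (d i)) (RTensor.map R I (d (i + 1)))

/-- A left `R`-module is Gorenstein flat if it admits a Gorenstein flat witness. -/
def IsGorensteinFlat (R : Type u) [Ring R]
    (M : Type u) [AddCommGroup M] [Module R M] : Prop :=
  Nonempty (GorensteinFlatWitness R M)

/-- `0 → A → B → C → 0` is a short exact sequence. -/
def IsShortExact {R : Type u} [Ring R] {A B C : Type u}
    [AddCommGroup A] [Module R A] [AddCommGroup B] [Module R B] [AddCommGroup C] [Module R C]
    (f : A →ₗ[R] B) (g : B →ₗ[R] C) : Prop :=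
  Function.Injective f ∧ Function.Exact f g ∧ Function.Surjective g

/-- A ring `R` is left GF-closed if the class of Gorenstein flat left `R`-modules is
closed under extensions. -/
def LeftGFClosed (R : Type u) [Ring R] : Prop :=
  ∀ (A B C : Type u) [AddCommGroup A] [Module R A] [AddCommGroup B] [Module R B]
    [AddCommGroup C] [Module R C] (f : A →ₗ[R] B) (g : B →ₗ[R] C),
    IsShortExact f g → IsGorensteinFlat R A → IsGorensteinFlat R C → IsGorensteinFlat R B

/-!
Write `S = ∏ i, R i` and `eᵢ = Pi.single i 1`, a central idempotent of `S`. Restriction along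
`S → R i` turns `R i`-modules into `S`-modules, and `M ↦ eᵢ M` turns `S`-modules into
`R i`-modules. Both functors are exact, preserve flatness (and, on right modules, injectivity),
and satisfy `A ⊗_S N ≅ A eᵢ ⊗_{R i} N` and `A ⊗_{R i} eᵢ M ≅ A ⊗_S M`, so both carry the
complete flat resolutions defining Gorenstein flatness to resolutions of the same kind. Every
`S`-module is `M ≅ ∏ i, eᵢ M` and finite products preserve Gorenstein flatness, so an extension
of `S`-modules is Gorenstein flat once its components are; conversely, an extension of
`R i`-modules is the `i`-th component of itself viewed over `S`.
-/

/-! ### Tensor products over a noncommutative ring -/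

namespace RTensor

variable {R : Type u} [Ring R]
variable {A : Type u} [AddCommGroup A] [Module Rᵐᵒᵖ A]
variable {B B' B'' : Type u} [AddCommGroup B] [Module R B] [AddCommGroup B'] [Module R B']
  [AddCommGroup B''] [Module R B'']

variable (R) in
noncomputable def tmul (a : A) (b : B) : RTensor R A B :=
  Submodule.Quotient.mk (a ⊗ₜ[ℤ] b)

lemma smul_tmul (r : R) (a : A) (b : B) :
    tmul R (MulOpposite.op r • a) b = tmul R a (r • b) :=
  (Submodule.Quotient.eq (trel R A B)).mpr (Submodule.subset_span ⟨r, a, b, rfl⟩)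

lemma add_tmul (a a' : A) (b : B) : tmul R (a + a') b = tmul R a b + tmul R a' b := by
  rw [tmul, TensorProduct.add_tmul]; rfl

lemma tmul_add (a : A) (b b' : B) : tmul R a (b + b') = tmul R a b + tmul R a b' := by
  rw [tmul, TensorProduct.tmul_add]; rfl

lemma tmul_sum {κ : Type*} (s : Finset κ) (a : A) (b : κ → B) :
    tmul R a (∑ k ∈ s, b k) = ∑ k ∈ s, tmul R a (b k) :=
  map_sum (AddMonoidHom.mk' (tmul R a) (tmul_add a)) b s

lemma hom_ext {C : Type*} [AddCommGroup C] [Module ℤ C] {φ ψ : RTensor R A B →ₗ[ℤ] C}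
    (h : ∀ (a : A) (b : B), φ (tmul R a b) = ψ (tmul R a b)) : φ = ψ :=
  Submodule.linearMap_qext _ (TensorProduct.ext' h)

noncomputable def lift {C : Type u} [AddCommGroup C] (f : A → B → C)
    (add_left : ∀ a a' b, f (a + a') b = f a b + f a' b)
    (add_right : ∀ a b b', f a (b + b') = f a b + f a b')
    (balanced : ∀ (r : R) a b, f (MulOpposite.op r • a) b = f a (r • b)) :
    RTensor R A B →ₗ[ℤ] C := by
  refine Submodule.liftQ (trel R A B) (TensorProduct.lift
    { toFun a := (AddMonoidHom.mk' (f a) (add_right a)).toIntLinearMap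
      map_add' a a' := by ext b; exact add_left a a' b
      map_smul' z a := by
        ext b
        exact map_zsmul (AddMonoidHom.mk' (f · b) (add_left · · b)) z a }) ?_
  rw [trel, Submodule.span_le]
  rintro _ ⟨r, a, b, rfl⟩
  show TensorProduct.lift _ ((MulOpposite.op r • a) ⊗ₜ[ℤ] b - a ⊗ₜ[ℤ] (r • b)) = 0
  rw [map_sub, TensorProduct.lift.tmul, TensorProduct.lift.tmul]
  exact sub_eq_zero.mpr (balanced r a b)

@[simp] lemma map_tmul (f : B →ₗ[R] B') (a : A) (b : B) :
    RTensor.map R A f (tmul R a b) = tmul R a (f b) := rfl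

lemma map_id : RTensor.map R A (LinearMap.id : B →ₗ[R] B) = LinearMap.id :=
  hom_ext fun _ _ => rfl

lemma map_comp (f' : B' →ₗ[R] B'') (f : B →ₗ[R] B') :
    RTensor.map R A (f' ∘ₗ f) = RTensor.map R A f' ∘ₗ RTensor.map R A f :=
  hom_ext fun _ _ => rfl

lemma map_zero : RTensor.map R A (0 : B →ₗ[R] B') = 0 :=
  hom_ext fun a _ => by
    rw [map_tmul, LinearMap.zero_apply, LinearMap.zero_apply, tmul, TensorProduct.tmul_zero]
    rfl

end RTensor

section Idempotents

variable {ι : Type} [DecidableEq ι] {R : ι → Type u} [∀ i, Ring (R i)]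

variable (R) in
def idem (i : ι) : ∀ j, R j := Pi.single i 1

lemma idem_mul (i : ι) (s : ∀ j, R j) : idem R i * s = Pi.single i (s i) := by
  rw [idem, ← Pi.single_mul_left, one_mul]

lemma mul_idem (i : ι) (s : ∀ j, R j) : s * idem R i = Pi.single i (s i) := by
  rw [idem, ← Pi.single_mul_right, mul_one]

lemma idem_mul_self (i : ι) : idem R i * idem R i = idem R i := by
  rw [idem_mul, idem, Pi.single_eq_same]

lemma idem_mul_of_ne {i j : ι} (h : i ≠ j) : idem R i * idem R j = 0 := by
  rw [idem_mul, idem, Pi.single_eq_of_ne h, Pi.single_zero]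

lemma sum_idem [Fintype ι] : ∑ i, idem R i = 1 :=
  Finset.univ_sum_single 1

end Idempotents

/-! ### Components and restrictions over a product of rings -/
section Components

open MulOpposite

variable {ι : Type} [DecidableEq ι] (R : ι → Type u) [∀ i, Ring (R i)] (i : ι)

section CompL

variable (M : Type u) [AddCommGroup M] [Module (∀ j, R j) M]

def compLSub : Submodule ℤ M where
  carrier := {m | idem R i • m = m}
  add_mem' {a b} ha hb := by rw [Set.mem_ofPred_eq, smul_add, ha, hb]
  zero_mem' := smul_zero _
  smul_mem' z m hm := by rw [Set.mem_ofPred_eq, smul_comm, hm]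

/-- The component `eᵢ M`, with `eᵢ = idem R i`, as an `R i`-module. -/
def CompL : Type u := compLSub R i M

noncomputable instance : AddCommGroup (CompL R i M) := by unfold CompL; infer_instance

variable {R i M}

def CompL.mk (m : M) (h : idem R i • m = m) : CompL R i M := ⟨m, h⟩

def CompL.val (x : CompL R i M) : M := Subtype.val x

lemma CompL.prop (x : CompL R i M) : idem R i • x.val = x.val := x.2

lemma CompL.ext {x y : CompL R i M} (h : x.val = y.val) : x = y := Subtype.ext h

@[simp] lemma CompL.val_add (x y : CompL R i M) : (x + y).val = x.val + y.val := rfl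
@[simp] lemma CompL.val_zero : (0 : CompL R i M).val = 0 := rfl

instance : SMul (R i) (CompL R i M) :=
  ⟨fun r x => CompL.mk (Pi.single i r • x.val) (by rw [smul_smul, idem_mul, Pi.single_eq_same])⟩

@[simp] lemma CompL.val_smul (r : R i) (x : CompL R i M) :
    (r • x).val = Pi.single i r • x.val := rfl

noncomputable instance : Module (R i) (CompL R i M) where
  one_smul x := CompL.ext x.prop
  mul_smul r r' x := CompL.ext (by simp only [CompL.val_smul, Pi.single_mul, mul_smul])
  smul_zero r := CompL.ext (smul_zero _)
  smul_add r x y := CompL.ext (smul_add _ _ _)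
  add_smul r r' x := CompL.ext (by simp only [CompL.val_smul, CompL.val_add, Pi.single_add,
    add_smul])
  zero_smul x := CompL.ext (by simp only [CompL.val_smul, CompL.val_zero, Pi.single_zero,
    zero_smul])

variable (R i) in
def CompL.proj (m : M) : CompL R i M :=
  CompL.mk (idem R i • m) (by rw [smul_smul, idem_mul_self])

@[simp] lemma CompL.val_proj (m : M) : (CompL.proj R i m).val = idem R i • m := rfl

lemma CompL.proj_val (x : CompL R i M) : CompL.proj R i x.val = x := CompL.ext x.prop

lemma CompL.proj_add (m m' : M) :
    CompL.proj R i (m + m') = CompL.proj R i m + CompL.proj R i m' := CompL.ext (smul_add _ _ _)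

lemma CompL.proj_smul (s : ∀ j, R j) (m : M) :
    CompL.proj R i (s • m) = s i • CompL.proj R i m := CompL.ext (by
  simp only [CompL.val_proj, CompL.val_smul, smul_smul, idem_mul, mul_idem, Pi.single_eq_same])

end CompL

section CompR

variable (M : Type u) [AddCommGroup M] [Module (∀ j, R j)ᵐᵒᵖ M]

def compRSub : Submodule ℤ M where
  carrier := {m | op (idem R i) • m = m}
  add_mem' {a b} ha hb := by rw [Set.mem_ofPred_eq, smul_add, ha, hb]
  zero_mem' := smul_zero _
  smul_mem' z m hm := by rw [Set.mem_ofPred_eq, smul_comm, hm]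

/-- The component `M eᵢ`, with `eᵢ = idem R i`, as a right `R i`-module. -/
def CompR : Type u := compRSub R i M

noncomputable instance : AddCommGroup (CompR R i M) := by unfold CompR; infer_instance

variable {R i M}

def CompR.mk (m : M) (h : op (idem R i) • m = m) : CompR R i M := ⟨m, h⟩

def CompR.val (x : CompR R i M) : M := Subtype.val x

lemma CompR.prop (x : CompR R i M) : op (idem R i) • x.val = x.val := x.2

lemma CompR.ext {x y : CompR R i M} (h : x.val = y.val) : x = y := Subtype.ext h

@[simp] lemma CompR.val_add (x y : CompR R i M) : (x + y).val = x.val + y.val := rfl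
@[simp] lemma CompR.val_zero : (0 : CompR R i M).val = 0 := rfl

instance : SMul (R i)ᵐᵒᵖ (CompR R i M) :=
  ⟨fun r x => CompR.mk (op (Pi.single i r.unop) • x.val) (by
    rw [smul_smul, ← op_mul, mul_idem, Pi.single_eq_same])⟩

@[simp] lemma CompR.val_smul (r : (R i)ᵐᵒᵖ) (x : CompR R i M) :
    (r • x).val = op (Pi.single i r.unop) • x.val := rfl

noncomputable instance : Module (R i)ᵐᵒᵖ (CompR R i M) where
  one_smul x := CompR.ext x.prop
  mul_smul r r' x := CompR.ext (by
    simp only [CompR.val_smul, smul_smul, ← op_mul, unop_mul, Pi.single_mul])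
  smul_zero r := CompR.ext (smul_zero _)
  smul_add r x y := CompR.ext (smul_add _ _ _)
  add_smul r r' x := CompR.ext (by simp only [CompR.val_smul, CompR.val_add, unop_add,
    Pi.single_add, op_add, add_smul])
  zero_smul x := CompR.ext (by simp only [CompR.val_smul, CompR.val_zero, unop_zero,
    Pi.single_zero, op_zero, zero_smul])

variable (R i) in
def CompR.proj (m : M) : CompR R i M :=
  CompR.mk (op (idem R i) • m) (by rw [smul_smul, ← op_mul, idem_mul_self])

@[simp] lemma CompR.val_proj (m : M) : (CompR.proj R i m).val = op (idem R i) • m := rfl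

lemma CompR.proj_val (x : CompR R i M) : CompR.proj R i x.val = x := CompR.ext x.prop

lemma CompR.proj_add (m m' : M) :
    CompR.proj R i (m + m') = CompR.proj R i m + CompR.proj R i m' := CompR.ext (smul_add _ _ _)

lemma CompR.proj_smul (s : (∀ j, R j)ᵐᵒᵖ) (m : M) :
    CompR.proj R i (s • m) = op (s.unop i) • CompR.proj R i m := CompR.ext (by
  rw [← op_unop s]
  simp only [CompR.val_proj, CompR.val_smul, smul_smul, ← op_mul, idem_mul, mul_idem, unop_op,
    Pi.single_eq_same])

lemma CompR.smul_val (s : (∀ j, R j)ᵐᵒᵖ) (x : CompR R i M) :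
    s • x.val = (op (s.unop i) • x).val := by
  conv_lhs => rw [← x.prop, smul_smul, ← op_unop s, ← op_mul, idem_mul]
  rfl

end CompR

end Components

section Restriction

open MulOpposite

/-- An `R i`-module regarded as a module over `∏ j, R j` through the projection onto `R i`. -/
def ResL {ι : Type} (_R : ι → Type u) (_i : ι) (N : Type u) : Type u := N

/-- A right `R i`-module regarded as a right module over `∏ j, R j`. -/
def ResR {ι : Type} (_R : ι → Type u) (_i : ι) (N : Type u) : Type u := N

variable {ι : Type} {R : ι → Type u} {i : ι} {N : Type u}

def ResL.mk (x : N) : ResL R i N := x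

def ResL.val (x : ResL R i N) : N := x

def ResR.mk (x : N) : ResR R i N := x

def ResR.val (x : ResR R i N) : N := x

@[simp] lemma ResL.val_mk (x : N) : (ResL.mk x : ResL R i N).val = x := rfl
@[simp] lemma ResL.mk_val (x : ResL R i N) : ResL.mk x.val = x := rfl
@[simp] lemma ResR.val_mk (x : N) : (ResR.mk x : ResR R i N).val = x := rfl
@[simp] lemma ResR.mk_val (x : ResR R i N) : ResR.mk x.val = x := rfl

variable [AddCommGroup N]

instance : AddCommGroup (ResL R i N) := ‹AddCommGroup N›

instance : AddCommGroup (ResR R i N) := ‹AddCommGroup N›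

@[simp] lemma ResR.val_add (x y : ResR R i N) : (x + y).val = x.val + y.val := rfl

variable [∀ i, Ring (R i)]

noncomputable instance [Module (R i) N] : Module (∀ j, R j) (ResL R i N) :=
  Module.compHom N (Pi.evalRingHom R i)

noncomputable instance [Module (R i)ᵐᵒᵖ N] : Module (∀ j, R j)ᵐᵒᵖ (ResR R i N) :=
  Module.compHom N (RingHom.op (Pi.evalRingHom R i))

@[simp] lemma ResL.val_smul [Module (R i) N] (s : ∀ j, R j) (x : ResL R i N) :
    (s • x).val = s i • x.val := rfl

@[simp] lemma ResR.val_smul [Module (R i)ᵐᵒᵖ N] (s : (∀ j, R j)ᵐᵒᵖ) (x : ResR R i N) :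
    (s • x).val = op (s.unop i) • x.val := rfl

variable (i) in
noncomputable def ResL.map {N' : Type u} [AddCommGroup N'] [Module (R i) N] [Module (R i) N']
    (f : N →ₗ[R i] N') : ResL R i N →ₗ[∀ j, R j] ResL R i N' where
  toFun x := ResL.mk (f x.val)
  map_add' x y := map_add f x.val y.val
  map_smul' s x := map_smul f (s i) x.val

variable (i) in
noncomputable def ResR.map {N' : Type u} [AddCommGroup N'] [Module (R i)ᵐᵒᵖ N]
    [Module (R i)ᵐᵒᵖ N'] (f : N →ₗ[(R i)ᵐᵒᵖ] N') : ResR R i N →ₗ[(∀ j, R j)ᵐᵒᵖ] ResR R i N' where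
  toFun x := ResR.mk (f x.val)
  map_add' x y := map_add f x.val y.val
  map_smul' s x := map_smul f (op (s.unop i)) x.val

section

variable {N' N'' : Type u} [AddCommGroup N'] [AddCommGroup N'']

lemma ResL.map_exact [Module (R i) N] [Module (R i) N'] [Module (R i) N'']
    {f : N →ₗ[R i] N'} {g : N' →ₗ[R i] N''} (h : Function.Exact f g) :
    Function.Exact (ResL.map i f) (ResL.map i g) := h

variable (i) in
noncomputable def ResL.congr [Module (R i) N] [Module (R i) N'] (e : N ≃ₗ[R i] N') :
    ResL R i N ≃ₗ[∀ j, R j] ResL R i N' :=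
  .ofLinearMap (ResL.map i e.toLinearMap) (ResL.map i e.symm.toLinearMap)
    (LinearMap.ext fun x => e.apply_symm_apply x.val)
    (LinearMap.ext fun x => e.symm_apply_apply x.val)

end

variable [DecidableEq ι]

lemma ResL.idem_smul [Module (R i) N] (x : ResL R i N) : idem R i • x = x := by
  rw [← ResL.mk_val (idem R i • x), ResL.val_smul, idem, Pi.single_eq_same, one_smul,
    ResL.mk_val]

lemma ResR.idem_smul [Module (R i)ᵐᵒᵖ N] (x : ResR R i N) : op (idem R i) • x = x := by
  rw [← ResR.mk_val (op (idem R i) • x), ResR.val_smul, unop_op, idem, Pi.single_eq_same,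
    op_one, one_smul, ResR.mk_val]

lemma ResL.single_smul_mk [Module (R i) N] (r : R i) (n : N) :
    Pi.single i r • (ResL.mk n : ResL R i N) = ResL.mk (r • n) := by
  rw [← ResL.mk_val (_ • _), ResL.val_smul, ResL.val_mk, Pi.single_eq_same]

lemma ResR.single_smul_mk [Module (R i)ᵐᵒᵖ N] (r : R i) (n : N) :
    op (Pi.single i r) • (ResR.mk n : ResR R i N) = ResR.mk (op r • n) := by
  rw [← ResR.mk_val (_ • _), ResR.val_smul, ResR.val_mk, unop_op, Pi.single_eq_same]

end Restriction

section Functoriality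

open MulOpposite

variable {ι : Type} [DecidableEq ι] {R : ι → Type u} [∀ i, Ring (R i)] (i : ι)

section CompL

variable {M M' M'' : Type u} [AddCommGroup M] [Module (∀ j, R j) M]
  [AddCommGroup M'] [Module (∀ j, R j) M'] [AddCommGroup M''] [Module (∀ j, R j) M'']

noncomputable def CompL.map (f : M →ₗ[∀ j, R j] M') : CompL R i M →ₗ[R i] CompL R i M' where
  toFun x := CompL.mk (f x.val) (by rw [← map_smul, x.prop])
  map_add' x y := CompL.ext (map_add f x.val y.val)
  map_smul' r x := CompL.ext (map_smul f _ x.val)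

variable {i}

lemma CompL.map_proj (f : M →ₗ[∀ j, R j] M') (m : M) :
    CompL.map i f (CompL.proj R i m) = CompL.proj R i (f m) := CompL.ext (map_smul f _ m)

lemma CompL.map_injective {f : M →ₗ[∀ j, R j] M'} (hf : Function.Injective f) :
    Function.Injective (CompL.map i f) := fun _ _ h =>
  CompL.ext (hf (congrArg CompL.val h))

lemma CompL.mem_range_map {f : M →ₗ[∀ j, R j] M'} {y : CompL R i M'} (hy : y.val ∈ Set.range f) :
    y ∈ Set.range (CompL.map i f) := by
  obtain ⟨x, hx⟩ := hy
  exact ⟨CompL.proj R i x, by rw [CompL.map_proj, hx, CompL.proj_val]⟩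

lemma CompL.map_surjective {f : M →ₗ[∀ j, R j] M'} (hf : Function.Surjective f) :
    Function.Surjective (CompL.map i f) := fun y =>
  CompL.mem_range_map (hf y.val)

lemma CompL.map_exact {f : M →ₗ[∀ j, R j] M'} {g : M' →ₗ[∀ j, R j] M''}
    (h : Function.Exact f g) : Function.Exact (CompL.map i f) (CompL.map i g) := fun y =>
  ⟨fun hy => CompL.mem_range_map ((h y.val).mp (congrArg CompL.val hy)),
    fun ⟨x, hx⟩ => hx ▸ CompL.ext (h.apply_apply_eq_zero x.val)⟩

variable (i) in
noncomputable def CompL.congr (e : M ≃ₗ[∀ j, R j] M') : CompL R i M ≃ₗ[R i] CompL R i M' :=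
  .ofLinearMap (CompL.map i e.toLinearMap) (CompL.map i e.symm.toLinearMap)
    (LinearMap.ext fun x => CompL.ext (e.apply_symm_apply x.val))
    (LinearMap.ext fun x => CompL.ext (e.symm_apply_apply x.val))

end CompL

section CompR

variable {M M' : Type u} [AddCommGroup M] [Module (∀ j, R j)ᵐᵒᵖ M]
  [AddCommGroup M'] [Module (∀ j, R j)ᵐᵒᵖ M']

noncomputable def CompR.map (f : M →ₗ[(∀ j, R j)ᵐᵒᵖ] M') :
    CompR R i M →ₗ[(R i)ᵐᵒᵖ] CompR R i M' where
  toFun x := CompR.mk (f x.val) (by rw [← map_smul, x.prop])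
  map_add' x y := CompR.ext (map_add f x.val y.val)
  map_smul' r x := CompR.ext (map_smul f _ x.val)

variable {i}

lemma CompR.map_proj (f : M →ₗ[(∀ j, R j)ᵐᵒᵖ] M') (m : M) :
    CompR.map i f (CompR.proj R i m) = CompR.proj R i (f m) := CompR.ext (map_smul f _ m)

lemma CompR.map_injective {f : M →ₗ[(∀ j, R j)ᵐᵒᵖ] M'} (hf : Function.Injective f) :
    Function.Injective (CompR.map i f) := fun _ _ h =>
  CompR.ext (hf (congrArg CompR.val h))

end CompR

variable {N : Type u} [AddCommGroup N] [Module (R i) N]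

variable (N) in
noncomputable def compLResLEquiv : CompL R i (ResL R i N) ≃ₗ[R i] N where
  toFun x := x.val.val
  invFun y := CompL.mk (ResL.mk y) (ResL.idem_smul _)
  map_add' _ _ := rfl
  map_smul' r x := by
    simp only [CompL.val_smul, ResL.val_smul, Pi.single_eq_same, RingHom.id_apply]
  left_inv _ := CompL.ext rfl
  right_inv _ := rfl

end Functoriality

section Ranges

variable {ι : Type} {R : ι → Type u} [∀ i, Ring (R i)] {i : ι}

noncomputable def ResL.rangeEquiv {N N' : Type u} [AddCommGroup N] [Module (R i) N]
    [AddCommGroup N'] [Module (R i) N'] (f : N →ₗ[R i] N') :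
    ResL R i (LinearMap.range f) ≃ₗ[∀ j, R j] LinearMap.range (ResL.map i f) where
  toFun x := ⟨ResL.mk x.val.1, x.val.2⟩
  invFun y := ResL.mk ⟨y.1.val, y.2⟩
  map_add' _ _ := rfl
  map_smul' _ _ := rfl
  left_inv _ := rfl
  right_inv _ := rfl

noncomputable def CompL.rangeEquiv [DecidableEq ι] {M M' : Type u} [AddCommGroup M] [Module (∀ j, R j) M]
    [AddCommGroup M'] [Module (∀ j, R j) M'] (f : M →ₗ[∀ j, R j] M') :
    CompL R i (LinearMap.range f) ≃ₗ[R i] LinearMap.range (CompL.map i f) where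
  toFun x := ⟨CompL.mk x.val.1 (congrArg Subtype.val x.prop),
    CompL.mem_range_map (i := i) (y := CompL.mk _ _) x.val.2⟩
  invFun y := CompL.mk ⟨y.1.val, by
      obtain ⟨x, hx⟩ := y.2
      exact ⟨x.val, congrArg CompL.val hx⟩⟩
    (Subtype.ext y.1.prop)
  map_add' _ _ := rfl
  map_smul' _ _ := rfl
  left_inv _ := rfl
  right_inv _ := rfl

end Ranges

noncomputable def LinearMap.piRangeEquiv {S : Type u} [Ring S] {κ : Type*}
    {P Q : κ → Type u} [∀ k, AddCommGroup (P k)] [∀ k, Module S (P k)]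
    [∀ k, AddCommGroup (Q k)] [∀ k, Module S (Q k)] (f : ∀ k, P k →ₗ[S] Q k) :
    (∀ k, LinearMap.range (f k)) ≃ₗ[S] LinearMap.range (LinearMap.piMap f) where
  toFun y := ⟨fun k => y k, by
    choose x hx using fun k => (y k).2
    exact ⟨x, funext hx⟩⟩
  invFun z k := ⟨z.1 k, by
    obtain ⟨x, hx⟩ := z.2
    exact ⟨x k, congrFun hx k⟩⟩
  map_add' _ _ := rfl
  map_smul' _ _ := rfl
  left_inv _ := rfl
  right_inv _ := rfl

section Decomposition

variable {ι : Type} [Fintype ι] [DecidableEq ι] {R : ι → Type u} [∀ i, Ring (R i)]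

variable (M : Type u) [AddCommGroup M] [Module (∀ j, R j) M]

noncomputable def equivPiCompL : M ≃ₗ[∀ j, R j] ∀ i, ResL R i (CompL R i M) where
  toFun m i := ResL.mk (CompL.proj R i m)
  invFun x := ∑ i, (x i).val.val
  map_add' m m' := funext fun i => congrArg ResL.mk (CompL.proj_add m m')
  map_smul' s m := funext fun i => congrArg ResL.mk (CompL.proj_smul s m)
  left_inv m := by
    simp only [ResL.val_mk, CompL.val_proj, ← Finset.sum_smul, sum_idem, one_smul]
  right_inv x := funext fun i => congrArg ResL.mk <| CompL.ext <| by
    rw [CompL.val_proj, Finset.smul_sum, Finset.sum_eq_single i (fun j _ hj => by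
        rw [← (x j).val.prop, smul_smul, idem_mul_of_ne hj.symm, zero_smul])
      (fun h => absurd (Finset.mem_univ i) h)]
    exact (x i).val.prop

end Decomposition

/-! ### Tensor identities -/

namespace RTensor

open MulOpposite

section Components

variable {ι : Type} [DecidableEq ι] {R : ι → Type u} [∀ i, Ring (R i)] {i : ι}
  (A : Type u) [AddCommGroup A] (N : Type u) [AddCommGroup N]

variable (i) in
noncomputable def resLEquiv [Module (∀ j, R j)ᵐᵒᵖ A] [Module (R i) N] :
    RTensor (∀ j, R j) A (ResL R i N) ≃ₗ[ℤ] RTensor (R i) (CompR R i A) N :=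
  .ofLinearMap
    (lift (fun a b => tmul (R i) (CompR.proj R i a) b.val)
      (fun a a' b => by rw [CompR.proj_add, add_tmul])
      (fun a b b' => tmul_add _ _ _)
      (fun s a b => by rw [CompR.proj_smul, unop_op, smul_tmul, ResL.val_smul]))
    (lift (fun x n => tmul (∀ j, R j) x.val (ResL.mk n : ResL R i N))
      (fun x x' n => add_tmul _ _ _)
      (fun x n n' => tmul_add _ _ _)
      (fun r x n => by
        rw [CompR.val_smul, unop_op, smul_tmul, ResL.single_smul_mk]))
    (hom_ext fun x n => congrArg (tmul (R i) · n) (CompR.proj_val x))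
    (hom_ext fun a b => (smul_tmul _ a _).trans (congrArg (tmul _ a) (ResL.idem_smul b)))

variable (i) in
noncomputable def compLEquiv [Module (R i)ᵐᵒᵖ A] [Module (∀ j, R j) N] :
    RTensor (R i) A (CompL R i N) ≃ₗ[ℤ] RTensor (∀ j, R j) (ResR R i A) N :=
  .ofLinearMap
    (lift (fun a x => tmul (∀ j, R j) (ResR.mk a : ResR R i A) x.val)
      (fun a a' x => add_tmul _ _ _)
      (fun a x x' => tmul_add _ _ _)
      (fun r a x => by
        rw [CompL.val_smul, ← smul_tmul, ResR.single_smul_mk]))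
    (lift (fun a b => tmul (R i) a.val (CompL.proj R i b))
      (fun a a' b => add_tmul _ _ _)
      (fun a b b' => by rw [CompL.proj_add, tmul_add])
      (fun s a b => by rw [CompL.proj_smul, ResR.val_smul, unop_op, smul_tmul]))
    (hom_ext fun a b => (smul_tmul _ _ b).symm.trans (congrArg (tmul _ · b) (ResR.idem_smul a)))
    (hom_ext fun a x => congrArg (tmul (R i) a) (CompL.proj_val x))

variable {A N}

lemma lmap_comp_resLEquiv [Module (∀ j, R j)ᵐᵒᵖ A] [Module (R i) N] {A' : Type u}
    [AddCommGroup A'] [Module (∀ j, R j)ᵐᵒᵖ A'] (g : A →ₗ[(∀ j, R j)ᵐᵒᵖ] A') :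
    lmap (R i) (CompR.map i g) N ∘ₗ (resLEquiv i A N).toLinearMap
      = (resLEquiv i A' N).toLinearMap ∘ₗ lmap (∀ j, R j) g (ResL R i N) :=
  hom_ext fun a b => congrArg (tmul (R i) · b.val) (CompR.map_proj g a)

lemma map_comp_resLEquiv [Module (∀ j, R j)ᵐᵒᵖ A] [Module (R i) N] {N' : Type u}
    [AddCommGroup N'] [Module (R i) N'] (f : N →ₗ[R i] N') :
    RTensor.map (R i) (CompR R i A) f ∘ₗ (resLEquiv i A N).toLinearMap
      = (resLEquiv i A N').toLinearMap ∘ₗ RTensor.map (∀ j, R j) A (ResL.map i f) :=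
  hom_ext fun _ _ => rfl

lemma lmap_comp_compLEquiv [Module (R i)ᵐᵒᵖ A] [Module (∀ j, R j) N] {A' : Type u}
    [AddCommGroup A'] [Module (R i)ᵐᵒᵖ A'] (g : A →ₗ[(R i)ᵐᵒᵖ] A') :
    lmap (∀ j, R j) (ResR.map i g) N ∘ₗ (compLEquiv i A N).toLinearMap
      = (compLEquiv i A' N).toLinearMap ∘ₗ lmap (R i) g (CompL R i N) :=
  hom_ext fun _ _ => rfl

lemma map_comp_compLEquiv [Module (R i)ᵐᵒᵖ A] [Module (∀ j, R j) N] {N' : Type u}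
    [AddCommGroup N'] [Module (∀ j, R j) N'] (f : N →ₗ[∀ j, R j] N') :
    RTensor.map (∀ j, R j) (ResR R i A) f ∘ₗ (compLEquiv i A N).toLinearMap
      = (compLEquiv i A N').toLinearMap ∘ₗ RTensor.map (R i) A (CompL.map i f) :=
  hom_ext fun _ _ => rfl

end Components

section Pi

variable {S : Type u} [Ring S] (A : Type u) [AddCommGroup A] [Module Sᵐᵒᵖ A]
  {κ : Type} [Fintype κ] [DecidableEq κ]
  (P : κ → Type u) [∀ k, AddCommGroup (P k)] [∀ k, Module S (P k)]

noncomputable def toPi : RTensor S A (∀ k, P k) →ₗ[ℤ] ∀ k, RTensor S A (P k) :=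
  LinearMap.pi fun k => RTensor.map S A (LinearMap.proj k)

noncomputable def ofPi : (∀ k, RTensor S A (P k)) →ₗ[ℤ] RTensor S A (∀ k, P k) :=
  ∑ k, RTensor.map S A (LinearMap.single S P k) ∘ₗ LinearMap.proj k

lemma ofPi_apply (x : ∀ k, RTensor S A (P k)) :
    ofPi A P x = ∑ k, RTensor.map S A (LinearMap.single S P k) (x k) := by
  simp only [ofPi, LinearMap.sum_apply]
  rfl

lemma toPi_ofPi (x : ∀ k, RTensor S A (P k)) (j : κ) : toPi A P (ofPi A P x) j = x j := by
  rw [ofPi_apply]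
  show RTensor.map S A (LinearMap.proj j) _ = x j
  rw [map_sum, Finset.sum_eq_single j (fun k _ hk => by
      rw [← LinearMap.comp_apply, ← map_comp, LinearMap.proj_comp_single_ne S P j k hk.symm,
        map_zero, LinearMap.zero_apply])
    (fun h => absurd (Finset.mem_univ j) h),
    ← LinearMap.comp_apply, ← map_comp, LinearMap.proj_comp_single_same, map_id,
    LinearMap.id_apply]

lemma ofPi_toPi_tmul (a : A) (b : ∀ k, P k) : ofPi A P (toPi A P (tmul S a b)) = tmul S a b := by
  rw [ofPi_apply]
  show ∑ k, tmul S a (Pi.single k (b k)) = tmul S a b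
  rw [← tmul_sum, Finset.univ_sum_single]

noncomputable def piEquiv : RTensor S A (∀ k, P k) ≃ₗ[ℤ] ∀ k, RTensor S A (P k) :=
  .ofLinearMap (toPi A P) (ofPi A P) (LinearMap.ext fun x => funext (toPi_ofPi A P x))
    (hom_ext (ofPi_toPi_tmul A P))

variable {A P}

lemma piMap_comp_piEquiv {P' : κ → Type u} [∀ k, AddCommGroup (P' k)] [∀ k, Module S (P' k)]
    (f : ∀ k, P k →ₗ[S] P' k) :
    LinearMap.piMap (fun k => RTensor.map S A (f k)) ∘ₗ (piEquiv A P).toLinearMap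
      = (piEquiv A P').toLinearMap ∘ₗ RTensor.map S A (LinearMap.piMap f) :=
  hom_ext fun _ _ => rfl

lemma piMap_lmap_comp_piEquiv {A' : Type u} [AddCommGroup A'] [Module Sᵐᵒᵖ A']
    (g : A →ₗ[Sᵐᵒᵖ] A') :
    LinearMap.piMap (fun k => lmap S g (P k)) ∘ₗ (piEquiv A P).toLinearMap
      = (piEquiv A' P).toLinearMap ∘ₗ lmap S g (∀ k, P k) :=
  hom_ext fun _ _ => rfl

end Pi

end RTensor

/-! ### Transfer of flatness, injectivity and Gorenstein flatness -/

lemma Function.Injective.of_ladder_linearEquiv {S : Type*} [Semiring S] {M M' N N' : Type*}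
    [AddCommMonoid M] [AddCommMonoid M'] [AddCommMonoid N] [AddCommMonoid N']
    [Module S M] [Module S M'] [Module S N] [Module S N']
    {f : M →ₗ[S] N} {g : M' →ₗ[S] N'} (e₁ : M ≃ₗ[S] M') (e₂ : N ≃ₗ[S] N')
    (h : g ∘ₗ e₁.toLinearMap = e₂.toLinearMap ∘ₗ f) (hg : Function.Injective g) :
    Function.Injective f := by
  have hcomp : Function.Injective (e₂ ∘ f) := by
    rw [← LinearEquiv.coe_coe, ← LinearMap.coe_comp, ← h]
    exact hg.comp e₁.injective
  exact hcomp.of_comp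

lemma Function.Exact.piMap {κ : Type*} {P Q T : κ → Type*} [∀ k, Zero (T k)]
    {f : ∀ k, P k → Q k} {g : ∀ k, Q k → T k} (h : ∀ k, Function.Exact (f k) (g k)) :
    Function.Exact (Pi.map f) (Pi.map g) := fun y =>
  ⟨fun hy => by
    choose x hx using fun k => (h k (y k)).mp (congrFun hy k)
    exact ⟨x, funext hx⟩,
  fun ⟨x, hx⟩ => hx ▸ funext fun k => (h k).apply_apply_eq_zero (x k)⟩

section Flat

variable {ι : Type} [DecidableEq ι] {R : ι → Type u} [∀ i, Ring (R i)] {i : ι}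

lemma FlatModule.resL {N : Type u} [AddCommGroup N] [Module (R i) N] (hN : FlatModule (R i) N) :
    FlatModule (∀ j, R j) (ResL R i N) := fun A A' _ _ _ _ g hg =>
  .of_ladder_linearEquiv (RTensor.resLEquiv i A N) (RTensor.resLEquiv i A' N)
    (RTensor.lmap_comp_resLEquiv g) (hN _ _ _ (CompR.map_injective hg))

lemma FlatModule.compL {M : Type u} [AddCommGroup M] [Module (∀ j, R j) M]
    (hM : FlatModule (∀ j, R j) M) : FlatModule (R i) (CompL R i M) := fun A A' _ _ _ _ g hg =>
  .of_ladder_linearEquiv (RTensor.compLEquiv i A M) (RTensor.compLEquiv i A' M)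
    (RTensor.lmap_comp_compLEquiv g) (hM _ _ (ResR.map i g) hg)

end Flat

lemma FlatModule.pi {S : Type u} [Ring S] {κ : Type} [Fintype κ] [DecidableEq κ]
    {P : κ → Type u} [∀ k, AddCommGroup (P k)] [∀ k, Module S (P k)]
    (hP : ∀ k, FlatModule S (P k)) : FlatModule S (∀ k, P k) := fun A A' _ _ _ _ g hg =>
  .of_ladder_linearEquiv (RTensor.piEquiv A P) (RTensor.piEquiv A' P)
    (RTensor.piMap_lmap_comp_piEquiv g) (Function.Injective.piMap fun k => hP k A A' g hg)

section Injective

open MulOpposite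

variable {ι : Type} [DecidableEq ι] {R : ι → Type u} [∀ i, Ring (R i)] {i : ι}

lemma Module.Injective.resR {I : Type u} [AddCommGroup I] [Module (R i)ᵐᵒᵖ I]
    (hI : Module.Injective (R i)ᵐᵒᵖ I) : Module.Injective (∀ j, R j)ᵐᵒᵖ (ResR R i I) := by
  -- Restrict `g` to `X eᵢ`, extend it over `Y eᵢ`, and precompose with `y ↦ y eᵢ`.
  refine ⟨fun X Y _ _ _ _ f hf g => ?_⟩
  let g' : CompR R i X →ₗ[(R i)ᵐᵒᵖ] I :=
    { toFun x := (g x.val).val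
      map_add' x y := by rw [CompR.val_add, map_add, ResR.val_add]
      map_smul' r x := by
        rw [CompR.val_smul, map_smul, ResR.val_smul, unop_op, Pi.single_eq_same, op_unop]
        rfl }
  obtain ⟨h, hh⟩ := hI.out (CompR.map i f) (CompR.map_injective hf) g'
  let H : Y →ₗ[(∀ j, R j)ᵐᵒᵖ] ResR R i I :=
    { toFun y := ResR.mk (h (CompR.proj R i y))
      map_add' y y' := by rw [CompR.proj_add, map_add]; rfl
      map_smul' s y := by rw [CompR.proj_smul, map_smul]; rfl }
  refine ⟨H, fun x => ?_⟩
  change ResR.mk (h (CompR.proj R i (f x))) = g x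
  rw [← CompR.map_proj, hh]
  change ResR.mk (g (op (idem R i) • x)).val = g x
  rw [map_smul, ResR.mk_val, ResR.idem_smul]

lemma Module.Injective.compR {I : Type u} [AddCommGroup I] [Module (∀ j, R j)ᵐᵒᵖ I]
    (hI : Module.Injective (∀ j, R j)ᵐᵒᵖ I) : Module.Injective (R i)ᵐᵒᵖ (CompR R i I) := by
  -- Extend `g` along `f` viewed over `∏ j, R j`, then multiply the extension by `eᵢ`.
  refine ⟨fun X Y _ _ _ _ f hf g => ?_⟩
  let g' : ResR R i X →ₗ[(∀ j, R j)ᵐᵒᵖ] I :=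
    { toFun x := (g x.val).val
      map_add' x y := by rw [ResR.val_add, map_add, CompR.val_add]
      map_smul' s x := by
        rw [ResR.val_smul, map_smul, ← CompR.smul_val]
        rfl }
  obtain ⟨h, hh⟩ := hI.out (ResR.map i f) (fun _ _ hxy => hf hxy) g'
  let H : Y →ₗ[(R i)ᵐᵒᵖ] CompR R i I :=
    { toFun y := CompR.proj R i (h (ResR.mk y))
      map_add' y y' := by rw [← CompR.proj_add, ← map_add]; rfl
      map_smul' ρ y := by
        rw [← op_unop ρ, ← ResR.single_smul_mk, map_smul, CompR.proj_smul, unop_op,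
          Pi.single_eq_same]
        rfl }
  refine ⟨H, fun x => ?_⟩
  change CompR.proj R i (h (ResR.map i f (ResR.mk x))) = g x
  rw [hh]
  exact CompR.proj_val (g x)

end Injective

namespace IsShortExact

variable {ι : Type} {R : ι → Type u} [∀ i, Ring (R i)] {i : ι}

lemma resL {A B C : Type u} [AddCommGroup A] [Module (R i) A] [AddCommGroup B] [Module (R i) B]
    [AddCommGroup C] [Module (R i) C] {f : A →ₗ[R i] B} {g : B →ₗ[R i] C}
    (h : IsShortExact f g) : IsShortExact (ResL.map i f) (ResL.map i g) := h

lemma compL [DecidableEq ι] {A B C : Type u} [AddCommGroup A] [Module (∀ j, R j) A]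
    [AddCommGroup B] [Module (∀ j, R j) B] [AddCommGroup C] [Module (∀ j, R j) C]
    {f : A →ₗ[∀ j, R j] B} {g : B →ₗ[∀ j, R j] C} (h : IsShortExact f g) :
    IsShortExact (CompL.map i f) (CompL.map i g) :=
  ⟨CompL.map_injective h.1, CompL.map_exact h.2.1, CompL.map_surjective h.2.2⟩

end IsShortExact

namespace IsGorensteinFlat

lemma of_linearEquiv {S : Type u} [Ring S] {M M' : Type u} [AddCommGroup M] [Module S M]
    [AddCommGroup M'] [Module S M'] (h : IsGorensteinFlat S M) (e : M ≃ₗ[S] M') :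
    IsGorensteinFlat S M' :=
  let ⟨W⟩ := h
  ⟨{ W with iso := e.symm.trans W.iso }⟩

lemma pi {S : Type u} [Ring S] {κ : Type} [Fintype κ] [DecidableEq κ]
    {P : κ → Type u} [∀ k, AddCommGroup (P k)] [∀ k, Module S (P k)]
    (h : ∀ k, IsGorensteinFlat S (P k)) : IsGorensteinFlat S (∀ k, P k) := by
  have W k := (h k).some
  let (k : κ) (j : ℤ) : AddCommGroup ((W k).F j) := (W k).acg j
  let (k : κ) (j : ℤ) : Module S ((W k).F j) := (W k).mod j
  refine ⟨{ F j := ∀ k, (W k).F j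
            d j := LinearMap.piMap fun k => (W k).d j
            flat j := FlatModule.pi fun k => (W k).flat j
            exact j := Function.Exact.piMap fun k => (W k).exact j
            iso := (LinearEquiv.piCongrRight fun k => (W k).iso).trans
              (LinearMap.piRangeEquiv _)
            tensorExact I _ _ hI j := ?_ }⟩
  exact (Function.Exact.iff_of_ladder_linearEquiv (RTensor.piMap_comp_piEquiv _)
    (RTensor.piMap_comp_piEquiv _)).mp
    (Function.Exact.piMap fun k => (W k).tensorExact I hI j)

variable {ι : Type} [DecidableEq ι] {R : ι → Type u} [∀ i, Ring (R i)] {i : ι}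

lemma resL {N : Type u} [AddCommGroup N] [Module (R i) N] (h : IsGorensteinFlat (R i) N) :
    IsGorensteinFlat (∀ j, R j) (ResL R i N) := by
  obtain ⟨W⟩ := h
  let := W.acg
  let := W.mod
  refine ⟨{ F j := ResL R i (W.F j)
            d j := ResL.map i (W.d j)
            flat j := (W.flat j).resL
            exact j := ResL.map_exact (W.exact j)
            iso := (ResL.congr i W.iso).trans (ResL.rangeEquiv (W.d 0))
            tensorExact I _ _ hI j := ?_ }⟩
  exact (Function.Exact.iff_of_ladder_linearEquiv (RTensor.map_comp_resLEquiv _)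
    (RTensor.map_comp_resLEquiv _)).mp (W.tensorExact (CompR R i I) hI.compR j)

lemma compL {M : Type u} [AddCommGroup M] [Module (∀ j, R j) M]
    (h : IsGorensteinFlat (∀ j, R j) M) : IsGorensteinFlat (R i) (CompL R i M) := by
  obtain ⟨W⟩ := h
  let := W.acg
  let := W.mod
  refine ⟨{ F j := CompL R i (W.F j)
            d j := CompL.map i (W.d j)
            flat j := (W.flat j).compL
            exact j := CompL.map_exact (W.exact j)
            iso := (CompL.congr i W.iso).trans (CompL.rangeEquiv (W.d 0))
            tensorExact I _ _ hI j := ?_ }⟩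
  exact (Function.Exact.iff_of_ladder_linearEquiv (RTensor.map_comp_compLEquiv _)
    (RTensor.map_comp_compLEquiv _)).mp (W.tensorExact (ResR R i I) hI.resR j)

lemma of_forall_compL [Fintype ι] {M : Type u} [AddCommGroup M] [Module (∀ j, R j) M]
    (h : ∀ i, IsGorensteinFlat (R i) (CompL R i M)) : IsGorensteinFlat (∀ j, R j) M :=
  (pi fun i => (h i).resL).of_linearEquiv (equivPiCompL M).symm

end IsGorensteinFlat

/-- A direct product of rings is left GF-closed iff each factor is left GF-closed. -/
theorem leftGFClosed_pi_iff (n : ℕ) (R : Fin n → Type u) [∀ i, Ring (R i)] :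
    LeftGFClosed (∀ i, R i) ↔ ∀ i, LeftGFClosed (R i) := by
  refine ⟨fun h i A B C _ _ _ _ _ _ f g hfg hA hC => ?_,
    fun h A B C _ _ _ _ _ _ f g hfg hA hC => ?_⟩
  · exact (h _ _ _ _ _ hfg.resL hA.resL hC.resL).compL.of_linearEquiv (compLResLEquiv i B)
  · exact .of_forall_compL fun i => h i _ _ _ _ _ hfg.compL hA.compL hC.compL
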